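/- arXiv:1701.04890 — 2 statements merged into one kernel-verified Lean document; each statement's English description precedes it below -/
import Mathlib

section
/- Let R : Polynomial ℂ with R.coeff 0 ≠ 0 and natDegree R = e, let D : ℕ, and assume R and R⋆[e] are coprime (IsCoprime in Polynomial ℂ). If H : Polynomial ℂ satisfies natDegree H ≤ e + D and R * H⋆[e + D] + R⋆[e] * H = 0, then there exists S : Polynomial ℂ with natDegree S ≤ D and S⋆[D] = S such that H = (Complex.I) • (R * S). -/
/-- The conjugate-reciprocal of `P` with respect to `N`. -/
noncomputable def creflect (N : ℕ) (P : Polynomial ℂ) : Polynomial ℂ :=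
  Polynomial.reflect N (P.map (starRingEnd ℂ))

/-!
Since `R ∣ R⋆ H` and `R` is coprime to `R⋆`, we get `H = R T` with `deg T ≤ D`. The
conjugate-reciprocal is multiplicative, `(R T)⋆[e + D] = R⋆[e] T⋆[D]`, so the equation becomes
`R R⋆ (T⋆ + T) = 0`, i.e. `T` is anti-self-reciprocal; then `S = -i T` is self-reciprocal
and `H = i R S`.
-/

open Polynomial

lemma Polynomial.natDegree_le_of_mul_le {R : Type*} [Semiring R] [NoZeroDivisors R]
    {p q : R[X]} {n : ℕ} (hp : p ≠ 0) (h : (p * q).natDegree ≤ p.natDegree + n) :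
    q.natDegree ≤ n := by
  rcases eq_or_ne q 0 with rfl | hq
  · simp
  · rw [natDegree_mul hp hq] at h
    omega

lemma creflect_eq_zero_iff {N : ℕ} {P : ℂ[X]} : creflect N P = 0 ↔ P = 0 := by
  simp [creflect, reflect_eq_zero_iff]

lemma creflect_mul {M N : ℕ} {P Q : ℂ[X]} (hP : P.natDegree ≤ M) (hQ : Q.natDegree ≤ N) :
    creflect (M + N) (P * Q) = creflect M P * creflect N Q := by
  rw [creflect, Polynomial.map_mul,
    reflect_mul _ _ (natDegree_map_le.trans hP) (natDegree_map_le.trans hQ)]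
  rfl

lemma creflect_smul (N : ℕ) (c : ℂ) (P : ℂ[X]) :
    creflect N (c • P) = starRingEnd ℂ c • creflect N P := by
  simp only [creflect, smul_eq_C_mul, Polynomial.map_mul, map_C, reflect_C_mul]

lemma creflect_eq_neg_of_mul_solution {e D : ℕ} {R T : ℂ[X]} (hR : R ≠ 0)
    (he : R.natDegree ≤ e) (hT : T.natDegree ≤ D)
    (heq : R * creflect (e + D) (R * T) + creflect e R * (R * T) = 0) :
    creflect D T = -T := by
  rw [creflect_mul he hT] at heq
  have hfactor : R * creflect e R * (creflect D T + T) = 0 := by linear_combination heq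
  have hRR : R * creflect e R ≠ 0 := mul_ne_zero hR (creflect_eq_zero_iff.not.mpr hR)
  linear_combination (mul_eq_zero.mp hfactor).resolve_left hRR

theorem coprime_antiSelfReciprocal_solutions_general (R : Polynomial ℂ) (e D : ℕ)
    (he : R.natDegree = e)
    (hcop : IsCoprime R (creflect e R))
    (H : Polynomial ℂ) (hH : H.natDegree ≤ e + D)
    (heq : R * creflect (e + D) H + creflect e R * H = 0) :
    ∃ S : Polynomial ℂ, S.natDegree ≤ D ∧ creflect D S = S ∧
      H = Complex.I • (R * S) := by
  have hR : R ≠ 0 := by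
    rintro rfl
    exact not_isCoprime_zero_zero (by simpa [creflect] using hcop)
  obtain ⟨T, rfl⟩ : R ∣ H :=
    hcop.dvd_of_dvd_mul_left ⟨-creflect (e + D) H, by linear_combination heq⟩
  have hT : T.natDegree ≤ D := natDegree_le_of_mul_le hR (he ▸ hH)
  have hanti : creflect D T = -T :=
    creflect_eq_neg_of_mul_solution hR he.le hT heq
  refine ⟨(-Complex.I) • T, (natDegree_smul_le _ _).trans hT, ?_, ?_⟩
  · rw [creflect_smul, hanti]
    simp
  · rw [mul_smul_comm, smul_smul]
    simp

/-- If `R` and `R⋆` are coprime, solutions `H` of `R H⋆ + R⋆ H = 0` are of the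
form `i R S` with `S` self-reciprocal. -/
theorem coprime_antiSelfReciprocal_solutions (R : Polynomial ℂ) (e D : ℕ)
    (h0 : R.coeff 0 ≠ 0) (he : R.natDegree = e)
    (hcop : IsCoprime R (creflect e R))
    (H : Polynomial ℂ) (hH : H.natDegree ≤ e + D)
    (heq : R * creflect (e + D) H + creflect e R * H = 0) :
    ∃ S : Polynomial ℂ, S.natDegree ≤ D ∧ creflect D S = S ∧
      H = Complex.I • (R * S) :=
  coprime_antiSelfReciprocal_solutions_general R e D he hcop H hH heq
end

section
/- Let X₁, X₂ : Polynomial ℂ with X₁.coeff 0 ≠ 0, X₂.coeff 0 ≠ 0, natDegree X₁ = d₁, natDegree X₂ = d₂, and IsCoprime X₁ X₂. Suppose Y₁, Y₂ : Polynomial ℂ satisfy natDegree Y₁ ≤ d₁, natDegree Y₂ ≤ d₂, and the correlation measurements agree: Y₁ * Y₁⋆[d₁] = X₁ * X₁⋆[d₁], Y₂ * Y₂⋆[d₂] = X₂ * X₂⋆[d₂], and Y₁ * Y₂⋆[d₂] = X₁ * X₂⋆[d₂]. Then there exists c : ℂ with Complex.abs c = 1 such that Y₁ = c • X₁ and Y₂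 = c • X₂. (Identifiability up to a global phase from the two autocorrelations and one cross-correlation.) -/
open Polynomial

lemma creflect_ne_zero {N : ℕ} {P : ℂ[X]} (hP : P ≠ 0) : creflect N P ≠ 0 := by
  simpa [creflect, reflect_eq_zero_iff] using hP

lemma creflect_C_mul (N : ℕ) (c : ℂ) (P : ℂ[X]) :
    creflect N (C c * P) = C (starRingEnd ℂ c) * creflect N P := by
  simp [creflect, Polynomial.map_mul, reflect_C_mul]

lemma mul_eq_mul_of_mul_eq_mul_of_mul_eq_mul {M : Type*} [CommMonoidWithZero M]
    [IsCancelMulZero M]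
    {x₁ x₂ y₁ y₂ s t : M} (ht : t ≠ 0) (h₂ : y₂ * s = x₂ * t) (h₁ : y₁ * s = x₁ * t) :
    y₁ * x₂ = x₁ * y₂ :=
  mul_right_cancel₀ ht <|
    calc y₁ * x₂ * t = y₁ * (y₂ * s) := by rw [h₂, mul_assoc]
      _ = x₁ * y₂ * t := by rw [← mul_assoc, mul_right_comm, h₁, mul_right_comm]

lemma Polynomial.exists_eq_C_mul_of_dvd_of_natDegree_le {R : Type*} [CommRing R] [IsDomain R]
    {p q : R[X]} (hp : p ≠ 0) (hdvd : p ∣ q) (hdeg : q.natDegree ≤ p.natDegree) :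
    ∃ c, q = C c * p := by
  obtain ⟨r, rfl⟩ := hdvd
  rcases eq_or_ne r 0 with rfl | hr
  · exact ⟨0, by simp⟩
  have hr₀ : r.natDegree = 0 := by
    rw [natDegree_mul hp hr] at hdeg
    omega
  exact ⟨r.coeff 0, by rw [mul_comm, ← eq_C_of_natDegree_eq_zero hr₀]⟩

lemma norm_eq_one_of_autocorrelation_C_mul {N : ℕ} {c : ℂ} {X : ℂ[X]}
    (hX : X ≠ 0) (h : C c * X * creflect N (C c * X) = X * creflect N X) : ‖c‖ = 1 := by
  have hcc : C (c * starRingEnd ℂ c) * (X * creflect N X) = 1 * (X * creflect N X) := by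
    rw [creflect_C_mul] at h
    rw [C_mul]
    linear_combination h
  have hsq : (‖c‖ : ℂ) ^ 2 = 1 := by
    rw [← Complex.mul_conj', ← C_inj, C_1]
    exact mul_right_cancel₀ (mul_ne_zero hX (creflect_ne_zero hX)) hcc
  exact (pow_eq_one_iff_of_nonneg (norm_nonneg c) two_ne_zero).mp (by exact_mod_cast hsq)

theorem phase_retrieval_uniqueness_general (X₁ X₂ Y₁ Y₂ : Polynomial ℂ) (d₁ d₂ : ℕ)
    (h₁ : X₁.coeff 0 ≠ 0) (h₂ : X₂.coeff 0 ≠ 0)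
    (hd₁ : X₁.natDegree = d₁)
    (hcop : IsCoprime X₁ X₂)
    (hY₁ : Y₁.natDegree ≤ d₁)
    (ha₁ : Y₁ * creflect d₁ Y₁ = X₁ * creflect d₁ X₁)
    (ha₂ : Y₂ * creflect d₂ Y₂ = X₂ * creflect d₂ X₂)
    (hc : Y₁ * creflect d₂ Y₂ = X₁ * creflect d₂ X₂) :
    ∃ c : ℂ, ‖c‖ = 1 ∧ Y₁ = c • X₁ ∧ Y₂ = c • X₂ := by
  have hX₁ : X₁ ≠ 0 := fun h => h₁ (by simp [h])
  have hX₂ : X₂ ≠ 0 := fun h => h₂ (by simp [h])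
  have hcross : Y₁ * X₂ = X₁ * Y₂ :=
    mul_eq_mul_of_mul_eq_mul_of_mul_eq_mul (creflect_ne_zero hX₂) ha₂ hc
  obtain ⟨c, rfl⟩ := exists_eq_C_mul_of_dvd_of_natDegree_le hX₁
    (hcop.dvd_of_dvd_mul_right ⟨Y₂, hcross⟩) (hY₁.trans_eq hd₁.symm)
  have hY₂ : Y₂ = C c * X₂ := mul_left_cancel₀ hX₁ (by rw [← hcross]; ring)
  exact ⟨c, norm_eq_one_of_autocorrelation_C_mul hX₁ ha₁,
    (smul_eq_C_mul c).symm, hY₂.trans (smul_eq_C_mul c).symm⟩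

/-- Identifiability up to a global phase from the two autocorrelations and one
cross-correlation, for coprime `X₁, X₂`. -/
theorem phase_retrieval_uniqueness (X₁ X₂ Y₁ Y₂ : Polynomial ℂ) (d₁ d₂ : ℕ)
    (h₁ : X₁.coeff 0 ≠ 0) (h₂ : X₂.coeff 0 ≠ 0)
    (hd₁ : X₁.natDegree = d₁) (hd₂ : X₂.natDegree = d₂)
    (hcop : IsCoprime X₁ X₂)
    (hY₁ : Y₁.natDegree ≤ d₁) (hY₂ : Y₂.natDegree ≤ d₂)
    (ha₁ : Y₁ * creflect d₁ Y₁ = X₁ * creflect d₁ X₁)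
    (ha₂ : Y₂ * creflect d₂ Y₂ = X₂ * creflect d₂ X₂)
    (hc : Y₁ * creflect d₂ Y₂ = X₁ * creflect d₂ X₂) :
    ∃ c : ℂ, ‖c‖ = 1 ∧ Y₁ = c • X₁ ∧ Y₂ = c • X₂ :=
  phase_retrieval_uniqueness_general X₁ X₂ Y₁ Y₂ d₁ d₂ h₁ h₂ hd₁ hcop hY₁ ha₁ ha₂ hc
end
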